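/- arXiv:1401.0611 — 4 statements merged into one kernel-verified Lean document; each statement's English description precedes it below -/
import Mathlib

section
/- Let X be a Coxeter graph satisfying condition (★). For all x ∈ W_c(X) and w ∉ W_c(X), Σ_{y : x ≤ y ≤ w} D_{x,y}(q) P_{y,w}(q) = 0. -/
/-!
Common setup: Coxeter systems, Bruhat order, fully commutative elements,
the Hecke algebra `H(X)`, the generalized Temperley--Lieb algebra `TL(X)`,
and the polynomial families `R`, `P` (Kazhdan--Lusztig), `D`, `a`, `L`.
-/

open LaurentPolynomial Polynomial

noncomputable section

namespace TLPaper

open scoped Classical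

/-- The ring `A = ℤ[q^{1/2}, q^{-1/2}]`, modelled as Laurent polynomials over `ℤ`
in the variable `T = q^{1/2}`. -/
abbrev A : Type := LaurentPolynomial ℤ

/-- The element `q = (q^{1/2})^2` of `A`. -/
def q : A := LaurentPolynomial.T 2

variable {B : Type*} {W : Type*} [Group W] {M : CoxeterMatrix B} (cs : CoxeterSystem M W)

/-- The Bruhat order on a Coxeter group: the reflexive-transitive closure of the relation
`x → xt` where `t` is a reflection and the length increases. -/
def bruhatLE : W → W → Prop :=
  Relation.ReflTransGen
    (fun x y => (∃ t : W, cs.IsReflection t ∧ y = x * t) ∧ cs.length x < cs.length y)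

/-- Strict Bruhat order. -/
def bruhatLT (x w : W) : Prop := bruhatLE cs x w ∧ x ≠ w

/-- A single commutation move on words: interchanging two adjacent commuting letters
(i.e. letters `i`, `j` with `M i j = 2`). -/
def CommMove (M : CoxeterMatrix B) (l₁ l₂ : List B) : Prop :=
  ∃ (a b : List B) (i j : B), M i j = 2 ∧ l₁ = a ++ i :: j :: b ∧ l₂ = a ++ j :: i :: b

/-- An element `w` is *fully commutative* if any reduced word for `w` can be obtained
from any other by a sequence of commutation moves. -/
def FullyCommutative (w : W) : Prop :=
  ∀ l₁ l₂ : List B, (cs.IsReduced l₁ ∧ cs.wordProd l₁ = w) →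
    (cs.IsReduced l₂ ∧ cs.wordProd l₂ = w) →
    Relation.ReflTransGen (CommMove M) l₁ l₂

/-- All the data of the paper: the Hecke algebra `H` of the Coxeter system `cs` with its
standard basis `Tw`, the `R`-polynomials, the Kazhdan--Lusztig polynomials `P`,
the generalized Temperley--Lieb algebra `TL = H/J` (with `proj` the canonical projection),
the `D`-polynomials, the `a`-polynomials, and the IC basis `c` with its `L`-polynomials.
The polynomial `L x w` is a polynomial in the variable `v = q^{-1/2}`;
all other polynomial families are polynomials in `q`. -/
structure TLContext {B : Type*} {W : Type*} [Group W] {M : CoxeterMatrix B}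
    (cs : CoxeterSystem M W)
    (H : Type*) [Ring H] [Algebra A H] (TL : Type*) [Ring TL] [Algebra A TL] where
  /-- The standard basis `{T_w}` of the Hecke algebra. -/
  Tw : W → H
  Tw_indep : LinearIndependent A Tw
  Tw_span : Submodule.span A (Set.range Tw) = ⊤
  Tw_one : Tw 1 = 1
  /-- Multiplication rule, case `ℓ(ws) > ℓ(w)`. -/
  Tw_mul_simple_of_lt : ∀ (w : W) (i : B),
    cs.length w < cs.length (w * cs.simple i) →
    Tw w * Tw (cs.simple i) = Tw (w * cs.simple i)
  /-- Multiplication rule, case `ℓ(ws) < ℓ(w)`. -/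
  Tw_mul_simple_of_gt : ∀ (w : W) (i : B),
    cs.length (w * cs.simple i) < cs.length w →
    Tw w * Tw (cs.simple i) = q • Tw (w * cs.simple i) + (q - 1) • Tw w
  /-- `Tinv w` is the inverse of `T_w` in `H`. -/
  Tinv : W → H
  Tw_mul_Tinv : ∀ w : W, Tw w * Tinv w = 1
  Tinv_mul_Tw : ∀ w : W, Tinv w * Tw w = 1
  /-- Bruhat lower sets are finite. -/
  finite_bruhatLE : ∀ w : W, {x | bruhatLE cs x w}.Finite
  /-- The `R`-polynomials. -/
  R : W → W → Polynomial ℤ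
  R_self : ∀ w : W, R w w = 1
  R_eq_zero : ∀ x w : W, ¬ bruhatLE cs x w → R x w = 0
  /-- `T_{w⁻¹}⁻¹ = ε_w q^{-ℓ(w)} Σ_{x ≤ w} ε_x R_{x,w}(q) T_x`. -/
  Tinv_eq : ∀ w : W, Tinv w⁻¹ =
    ((-1 : A) ^ cs.length w * LaurentPolynomial.T (-2 * (cs.length w : ℤ))) •
      ∑ᶠ x ∈ {x | bruhatLE cs x w},
        ((-1 : A) ^ cs.length x * Polynomial.aeval q (R x w)) • Tw x
  /-- The Kazhdan--Lusztig polynomials. -/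
  P : W → W → Polynomial ℤ
  P_self : ∀ w : W, P w w = 1
  P_eq_zero : ∀ x w : W, ¬ bruhatLE cs x w → P x w = 0
  /-- `deg P_{x,w} ≤ (ℓ(w) - ℓ(x) - 1)/2` for `x < w`. -/
  P_degree : ∀ x w : W, bruhatLT cs x w →
    2 * (P x w).natDegree + 1 ≤ cs.length w - cs.length x
  /-- The involution `ι` of the Hecke algebra. -/
  iotaH : H →+* H
  iotaH_involutive : ∀ h : H, iotaH (iotaH h) = h
  iotaH_Tw : ∀ w : W, iotaH (Tw w) = Tinv w⁻¹
  iotaH_smul : ∀ (a : A) (h : H),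
    iotaH (a • h) = (LaurentPolynomial.invert (R := ℤ) a) • iotaH h
  /-- `ι` fixes the Kazhdan--Lusztig basis element
  `C'_w = q^{-ℓ(w)/2} Σ_{x ≤ w} P_{x,w}(q) T_x`. -/
  iotaH_KL : ∀ w : W,
    iotaH ((LaurentPolynomial.T (-(cs.length w : ℤ)) : A) •
      ∑ᶠ x ∈ {x | bruhatLE cs x w}, (Polynomial.aeval q (P x w)) • Tw x) =
    (LaurentPolynomial.T (-(cs.length w : ℤ)) : A) •
      ∑ᶠ x ∈ {x | bruhatLE cs x w}, (Polynomial.aeval q (P x w)) • Tw x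
  /-- The canonical projection `σ : H → TL = H/J`. -/
  proj : H →ₐ[A] TL
  proj_surjective : Function.Surjective proj
  /-- The kernel of `σ` is the two-sided ideal `J` generated by the elements
  `Σ_{w ∈ ⟨s_i, s_j⟩} T_w`, over all pairs of non-commuting generators `s_i, s_j`
  such that `s_i s_j` has finite order. -/
  proj_ker : ∀ h : H, proj h = 0 ↔ h ∈ Submodule.span A
    {x : H | ∃ (i j : B) (a b : H), M i j ≠ 0 ∧ M i j ≠ 1 ∧ M i j ≠ 2 ∧
      x = a * (∑ᶠ u ∈ (Subgroup.closure {cs.simple i, cs.simple j} : Set W), Tw u) * b}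
  /-- The images `t_w = σ(T_w)`, `w` fully commutative, are linearly independent. -/
  t_indep : LinearIndependent A
    (fun x : {w : W // FullyCommutative cs w} => proj (Tw x.1))
  /-- The `D`-polynomials. -/
  D : W → W → Polynomial ℤ
  /-- `t_w = Σ_{x ∈ W_c, x ≤ w} D_{x,w}(q) t_x`. -/
  D_eq : ∀ w : W, proj (Tw w) =
    ∑ᶠ x ∈ {x | FullyCommutative cs x ∧ bruhatLE cs x w},
      (Polynomial.aeval q (D x w)) • proj (Tw x)
  D_self : ∀ w : W, FullyCommutative cs w → D w w = 1
  D_eq_zero : ∀ x w : W, ¬ (FullyCommutative cs x ∧ bruhatLE cs x w) → D x w = 0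
  /-- The `a`-polynomials. -/
  apol : W → W → Polynomial ℤ
  /-- `(t_{w⁻¹})⁻¹ = q^{-ℓ(w)} Σ_{y ∈ W_c, y ≤ w} a_{y,w}(q) t_y` for `w ∈ W_c`. -/
  apol_eq : ∀ w : W, FullyCommutative cs w →
    proj (Tinv w⁻¹) = (LaurentPolynomial.T (-2 * (cs.length w : ℤ)) : A) •
      ∑ᶠ y ∈ {y | FullyCommutative cs y ∧ bruhatLE cs y w},
        (Polynomial.aeval q (apol y w)) • proj (Tw y)
  apol_self : ∀ w : W, FullyCommutative cs w → apol w w = 1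
  apol_eq_zero : ∀ y w : W,
    ¬ (FullyCommutative cs y ∧ FullyCommutative cs w ∧ bruhatLE cs y w) → apol y w = 0
  /-- The involution `ι` of the Temperley--Lieb algebra. -/
  iotaTL : TL →+* TL
  iotaTL_involutive : ∀ x : TL, iotaTL (iotaTL x) = x
  iotaTL_t : ∀ w : W, iotaTL (proj (Tw w)) = proj (Tinv w⁻¹)
  iotaTL_smul : ∀ (a : A) (x : TL),
    iotaTL (a • x) = (LaurentPolynomial.invert (R := ℤ) a) • iotaTL x
  /-- The `L`-polynomials: `L x w` is a polynomial in the variable `v = q^{-1/2}`, and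
  `L_{x,w}(q^{-1/2})` is obtained by evaluating it at `T (-1) = q^{-1/2}`. -/
  L : W → W → Polynomial ℤ
  /-- The IC basis `{c_w}` of `TL`. -/
  c : W → TL
  /-- `c_w = Σ_{x ∈ W_c, x ≤ w} q^{-ℓ(x)/2} L_{x,w}(q^{-1/2}) t_x`. -/
  c_eq : ∀ w : W, FullyCommutative cs w →
    c w = ∑ᶠ x ∈ {x | FullyCommutative cs x ∧ bruhatLE cs x w},
      ((LaurentPolynomial.T (-(cs.length x : ℤ)) : A) *
        Polynomial.aeval (R := ℤ) ((LaurentPolynomial.T (-1) : A)) (L x w)) • proj (Tw x)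
  /-- Convention: `c_x = 0` for `x ∉ W_c`. -/
  c_eq_zero : ∀ w : W, ¬ FullyCommutative cs w → c w = 0
  /-- The IC basis is `ι`-invariant. -/
  c_invariant : ∀ w : W, FullyCommutative cs w → iotaTL (c w) = c w
  L_self : ∀ w : W, L w w = 1
  L_eq_zero : ∀ x w : W,
    ¬ (FullyCommutative cs x ∧ FullyCommutative cs w ∧ bruhatLE cs x w) → L x w = 0
  /-- `L_{x,w}(q^{-1/2}) ∈ q^{-1/2} ℤ[q^{-1/2}]` for `x < w`. -/
  L_coeff_zero : ∀ x w : W, bruhatLT cs x w → (L x w).coeff 0 = 0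

namespace TLContext

variable {B : Type*} {W : Type*} [Group W] {M : CoxeterMatrix B} {cs : CoxeterSystem M W}
  {H : Type*} [Ring H] [Algebra A H] {TL : Type*} [Ring TL] [Algebra A TL]
  (Ctx : TLContext cs H TL)

/-- `μ(x,w)`: the coefficient of `q^{(ℓ(w)-ℓ(x)-1)/2}` in the Kazhdan--Lusztig
polynomial `P_{x,w}(q)` (which is zero unless `ℓ(w) - ℓ(x)` is odd). -/
def mu (x w : W) : ℤ :=
  if Odd (cs.length w - cs.length x) then
    (Ctx.P x w).coeff ((cs.length w - cs.length x - 1) / 2)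
  else 0

/-- The Kazhdan--Lusztig basis element `C'_w = q^{-ℓ(w)/2} Σ_{x ≤ w} P_{x,w}(q) T_x`. -/
def KL (w : W) : H :=
  (LaurentPolynomial.T (-(cs.length w : ℤ)) : A) •
    ∑ᶠ x ∈ {x | bruhatLE cs x w}, (Polynomial.aeval q (Ctx.P x w)) • Ctx.Tw x

/-- Condition (★): the projection sends the Kazhdan--Lusztig basis element `C'_w`
to `c_w` if `w ∈ W_c` and to `0` otherwise. -/
def Star : Prop :=
  (∀ w : W, FullyCommutative cs w → Ctx.proj (Ctx.KL w) = Ctx.c w) ∧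
  (∀ w : W, ¬ FullyCommutative cs w → Ctx.proj (Ctx.KL w) = 0)

/-- `L_{x,w}(q^{-1/2})` as an element of `A`. -/
def Lq (x w : W) : A := Polynomial.aeval (R := ℤ) ((LaurentPolynomial.T (-1) : A)) (Ctx.L x w)

/-- `L_{x,w}(q^{1/2})` as an element of `A`. -/
def Lq' (x w : W) : A := Polynomial.aeval (R := ℤ) ((LaurentPolynomial.T 1 : A)) (Ctx.L x w)

end TLContext

lemma aeval_q_eq_toLaurent (p : Polynomial ℤ) :
    Polynomial.aeval q p = Polynomial.toLaurent (p.comp (Polynomial.X ^ 2)) := by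
  have h1 : (Polynomial.toLaurentAlg : Polynomial ℤ →ₐ[ℤ] A) =
      Polynomial.aeval (LaurentPolynomial.T 1) := by
    apply Polynomial.algHom_ext
    simp [Polynomial.toLaurentAlg_apply]
  rw [← Polynomial.toLaurentAlg_apply, h1, Polynomial.aeval_comp]
  congr 1
  simp only [map_pow, Polynomial.aeval_X]
  rw [q, show (2 : ℤ) = 1 + 1 by norm_num, LaurentPolynomial.T_add]
  ring_nf

lemma aeval_q_injective :
    Function.Injective (fun p : Polynomial ℤ => Polynomial.aeval q p) := by
  intro p1 p2 h
  have h0 : Polynomial.aeval q (p1 - p2) = 0 := by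
    simp only [map_sub]
    simp only at h
    rw [h, sub_self]
  rw [aeval_q_eq_toLaurent] at h0
  have hc : (p1 - p2).comp (Polynomial.X ^ 2) = 0 :=
    Polynomial.toLaurent_injective (by simpa using h0)
  rw [Polynomial.comp_eq_zero_iff] at hc
  rcases hc with hc | ⟨_, hc⟩
  · exact sub_eq_zero.mp hc
  · exfalso
    have : ((Polynomial.X : Polynomial ℤ) ^ 2).coeff 0 = 0 := by
      simp [Polynomial.coeff_X_pow]
    rw [this, map_zero] at hc
    exact pow_ne_zero 2 Polynomial.X_ne_zero hc

/-- Lemma (paper, Lem. `lemain`): if `X` satisfies (★), `x ∈ W_c` and `w ∉ W_c`, then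
`Σ_{x ≤ y ≤ w} D_{x,y} P_{y,w} = 0`, interpreting `D_{x,y} = δ_{x,y}` for `y ∈ W_c`. -/
theorem statement14 {B : Type*} {W : Type*} [Group W] {M : CoxeterMatrix B} {cs : CoxeterSystem M W}
    {H : Type*} [Ring H] [Algebra A H] {TL : Type*} [Ring TL] [Algebra A TL]
    (Ctx : TLContext cs H TL)
    (hstar : Ctx.Star) (x w : W)
    (hx : FullyCommutative cs x) (hw : ¬ FullyCommutative cs w) :
    ∑ᶠ y ∈ {y | bruhatLE cs x y ∧ bruhatLE cs y w},
      ((if FullyCommutative cs y then (if x = y then 1 else 0) else Ctx.D x y) *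
        Ctx.P y w) = 0 := by
  classical
  by_cases hxw : bruhatLE cs x w
  swap
  · have hempty : {y | bruhatLE cs x y ∧ bruhatLE cs y w} = (∅ : Set W) := by
      ext y
      simp only [Set.mem_setOf_eq, Set.mem_empty_iff_false, iff_false, not_and]
      exact fun h1 h2 => hxw (h1.trans h2)
    rw [hempty, finsum_mem_empty]
  -- Notation
  set t : W → TL := fun y => Ctx.proj (Ctx.Tw y) with ht
  set D' : W → W → Polynomial ℤ := fun z y =>
    if FullyCommutative cs y then (if z = y then 1 else 0) else Ctx.D z y with hD'
  have hFw := Ctx.finite_bruhatLE w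
  set F : Finset W := hFw.toFinset with hF
  have hFmem : ∀ y, y ∈ F ↔ bruhatLE cs y w := fun y => hFw.mem_toFinset
  set Z : Finset W := F.filter (fun z => FullyCommutative cs z) with hZ
  have hZmem : ∀ z, z ∈ Z ↔ FullyCommutative cs z ∧ bruhatLE cs z w := by
    intro z; rw [hZ, Finset.mem_filter, hFmem]; tauto
  -- Step A : for y ≤ w, t y = ∑ z in Z, (aeval q (D' z y)) • t z
  have stepA : ∀ y : W, bruhatLE cs y w →
      t y = ∑ z ∈ Z, (Polynomial.aeval q (D' z y)) • t z := by
    intro y hyw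
    by_cases hfy : FullyCommutative cs y
    · have hyZ : y ∈ Z := (hZmem y).mpr ⟨hfy, hyw⟩
      have : ∀ z ∈ Z, (Polynomial.aeval q (D' z y)) • t z =
          if z = y then t y else 0 := by
        intro z _
        rw [hD']
        simp only [hfy, if_true]
        by_cases hzy : z = y
        · subst hzy; simp
        · simp [hzy]
      rw [Finset.sum_congr rfl this, Finset.sum_ite_eq' Z y (fun _ => t y), if_pos hyZ]
    · -- use D_eq
      have hSfin : {z | FullyCommutative cs z ∧ bruhatLE cs z y}.Finite :=
        (Ctx.finite_bruhatLE y).subset (fun z hz => hz.2)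
      have h1 : t y = ∑ z ∈ hSfin.toFinset, (Polynomial.aeval q (Ctx.D z y)) • t z := by
        rw [ht]
        simp only
        rw [Ctx.D_eq y, finsum_mem_eq_finite_toFinset_sum _ hSfin]
      rw [h1]
      have hsub : hSfin.toFinset ⊆ Z := by
        intro z hz
        rw [Set.Finite.mem_toFinset] at hz
        exact (hZmem z).mpr ⟨hz.1, hz.2.trans hyw⟩
      rw [Finset.sum_subset hsub ?_]
      · apply Finset.sum_congr rfl
        intro z _
        simp [hD', hfy]
      · intro z _ hz
        rw [Set.Finite.mem_toFinset] at hz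
        rw [Ctx.D_eq_zero z y hz, map_zero, zero_smul]
  -- Step B : 0 = ∑ y in F, (aeval q (P y w)) • t y
  have stepB : (0 : TL) = ∑ y ∈ F, (Polynomial.aeval q (Ctx.P y w)) • t y := by
    have h0 : Ctx.proj (Ctx.KL w) = 0 := hstar.2 w hw
    rw [TLContext.KL, map_smul] at h0
    have h1 : Ctx.proj (∑ᶠ y ∈ {y | bruhatLE cs y w},
        (Polynomial.aeval q (Ctx.P y w)) • Ctx.Tw y) = 0 := by
      have h2 := congrArg (fun z => (LaurentPolynomial.T (cs.length w : ℤ) : A) • z) h0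
      simp only [smul_zero, smul_smul] at h2
      rw [← LaurentPolynomial.T_add, add_neg_cancel, LaurentPolynomial.T_zero, one_smul] at h2
      exact h2
    rw [finsum_mem_eq_finite_toFinset_sum _ hFw, map_sum] at h1
    rw [← h1]
    apply Finset.sum_congr rfl
    intro y _
    rw [map_smul]
  -- Step C : 0 = ∑ z in Z, (aeval q (∑ y in F, D' z y * P y w)) • t z
  have stepC : (0 : TL) =
      ∑ z ∈ Z, (Polynomial.aeval q (∑ y ∈ F, D' z y * Ctx.P y w)) • t z := by
    rw [stepB]
    have : ∀ y ∈ F, (Polynomial.aeval q (Ctx.P y w)) • t y =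
        ∑ z ∈ Z, ((Polynomial.aeval q (D' z y)) * (Polynomial.aeval q (Ctx.P y w))) • t z := by
      intro y hy
      rw [stepA y ((hFmem y).mp hy), Finset.smul_sum]
      apply Finset.sum_congr rfl
      intro z _
      rw [smul_smul, mul_comm]
    rw [Finset.sum_congr rfl this, Finset.sum_comm]
    apply Finset.sum_congr rfl
    intro z _
    rw [map_sum, Finset.sum_smul]
    apply Finset.sum_congr rfl
    intro y _
    rw [map_mul]
  -- Step D : linear independence gives the coefficient at x is zero
  have hxZ : x ∈ Z := (hZmem x).mpr ⟨hx, hxw⟩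
  have stepD : Polynomial.aeval q (∑ y ∈ F, D' x y * Ctx.P y w) = 0 := by
    have hLI := linearIndependent_iff'.mp Ctx.t_indep
    set e : {z // z ∈ Z} ↪ {w : W // FullyCommutative cs w} :=
      ⟨fun z => ⟨z.1, ((hZmem z.1).mp z.2).1⟩, by
        intro a b hab
        have h3 : (a.1 : W) = b.1 := congrArg (fun u : {w : W // FullyCommutative cs w} => u.1) hab
        exact Subtype.ext h3⟩ with he
    set s : Finset {w : W // FullyCommutative cs w} := Z.attach.map e with hs
    set g : {w : W // FullyCommutative cs w} → A :=
      fun z => Polynomial.aeval q (∑ y ∈ F, D' z.1 y * Ctx.P y w) with hg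
    have hsum : ∑ i ∈ s, g i • Ctx.proj (Ctx.Tw i.1) = 0 := by
      rw [hs, Finset.sum_map]
      have h4 : ∑ z ∈ Z.attach, g (e z) • Ctx.proj (Ctx.Tw (e z).1) =
          ∑ z ∈ Z, (Polynomial.aeval q (∑ y ∈ F, D' z y * Ctx.P y w)) • t z := by
        rw [← Finset.sum_attach Z (fun z => (Polynomial.aeval q (∑ y ∈ F, D' z y * Ctx.P y w)) • t z)]
        rfl
      rw [h4, ← stepC]
    have hmem : (⟨x, hx⟩ : {w : W // FullyCommutative cs w}) ∈ s := by
      rw [hs, Finset.mem_map]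
      exact ⟨⟨x, hxZ⟩, Finset.mem_attach _ _, rfl⟩
    exact hLI s g hsum ⟨x, hx⟩ hmem
  have stepD' : ∑ y ∈ F, D' x y * Ctx.P y w = 0 := by
    have := aeval_q_injective (a₁ := ∑ y ∈ F, D' x y * Ctx.P y w) (a₂ := 0)
    simp only [map_zero] at this
    exact this stepD
  -- Step E : identify the goal finsum with the Finset sum
  have hS0fin : {y | bruhatLE cs x y ∧ bruhatLE cs y w}.Finite :=
    hFw.subset (fun y hy => hy.2)
  rw [finsum_mem_eq_finite_toFinset_sum _ hS0fin]
  show ∑ y ∈ hS0fin.toFinset, D' x y * Ctx.P y w = 0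
  rw [← stepD']
  apply Finset.sum_subset
  · intro y hy
    rw [Set.Finite.mem_toFinset] at hy
    exact (hFmem y).mpr hy.2
  · intro y hyF hy
    rw [Set.Finite.mem_toFinset, Set.mem_setOf_eq] at hy
    have hxy : ¬ bruhatLE cs x y := fun h => hy ⟨h, (hFmem y).mp hyF⟩
    show (if FullyCommutative cs y then (if x = y then 1 else 0) else Ctx.D x y) * Ctx.P y w = 0
    by_cases hfy : FullyCommutative cs y
    · simp only [hfy, if_true]
      have : x ≠ y := fun h => hxy (h ▸ Relation.ReflTransGen.refl)
      simp [this]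
    · simp only [hfy, if_false]
      rw [Ctx.D_eq_zero x y (fun h => hxy h.2), zero_mul]

end TLPaper
end
end

section
/- Let X be an arbitrary Coxeter graph, let w ∉ W_c(X), and let s ∈ S(X) be such that ws < w and ws ∉ W_c(X). Then for all x ∈ W_c(X) with x ≤ w, D_{x,w} = D̃_{x,w} + Σ_{y ∈ W_c(X), ys ∉ W_c(X), ys > y} D_{x,ys} D_{y,ws}, where D̃_{x,w} = D_{xs,ws} + (q−1) D_{x,ws} if xs < x; D̃_{x,w} = q D_{xs,ws} if x < xs and xs ∈ W_c(X); and D̃_{x,w} = 0 if x < xs and xs ∉ W_c(X). -/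
/-!
Common setup: Coxeter systems, Bruhat order, fully commutative elements,
the Hecke algebra `H(X)`, the generalized Temperley--Lieb algebra `TL(X)`,
and the polynomial families `R`, `P` (Kazhdan--Lusztig), `D`, `a`, `L`.
-/

open LaurentPolynomial Polynomial

noncomputable section

namespace TLPaper

variable {B : Type*} {W : Type*} [Group W] {M : CoxeterMatrix B} (cs : CoxeterSystem M W)

/-!
Since `ws < w`, `t_w = t_{ws} t_s = Σ_y D_{y,ws}(q) t_y t_s`, and each `t_y t_s` (`y ∈ W_c`) is
expanded in the basis `{t_x : x ∈ W_c}`: it is `q t_{ys} + (q - 1) t_y` if `ys < y` (and then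
`ys ∈ W_c` again), `t_{ys}` if `y < ys ∈ W_c`, and `Σ_x D_{x,ys}(q) t_x` if `y < ys ∉ W_c`.
Comparing the coefficients of `t_x`, using the linear independence of the `t_x`, gives the
recursion.
-/

variable {cs}

namespace CommMove

theorem wordProd_eq {l₁ l₂ : List B} (h : CommMove M l₁ l₂) :
    cs.wordProd l₁ = cs.wordProd l₂ := by
  obtain ⟨a, b, i, j, hM, rfl, rfl⟩ := h
  have hcomm : cs.simple i * cs.simple j = cs.simple j * cs.simple i := by
    have h2 := cs.simple_mul_simple_pow i j
    rw [hM, sq] at h2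
    simpa [mul_inv_rev] using (inv_eq_of_mul_eq_one_right h2).symm
  simp only [cs.wordProd_append, cs.wordProd_cons, ← mul_assoc, hcomm]

theorem length_eq {l₁ l₂ : List B} (h : CommMove M l₁ l₂) : l₁.length = l₂.length := by
  obtain ⟨a, b, i, j, -, rfl, rfl⟩ := h
  simp

theorem exists_of_append_cons {i : B} {pre suf l : List B}
    (h : CommMove M (pre ++ i :: suf) l) :
    ∃ pre' suf', l = pre' ++ i :: suf' ∧
      Relation.ReflTransGen (CommMove M) (pre ++ suf) (pre' ++ suf') := by
  obtain ⟨a, b, x, y, hM, heq, rfl⟩ := h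
  rcases List.append_eq_append_iff.mp heq with ⟨m, rfl, hb⟩ | ⟨m, rfl, hb⟩
  · rcases m with _ | ⟨z, m⟩
    · obtain ⟨rfl, rfl⟩ : i = x ∧ suf = y :: b := by simpa using hb
      exact ⟨pre ++ [y], b, by simp, by simpa using .refl⟩
    · obtain ⟨rfl, rfl⟩ : i = z ∧ suf = m ++ x :: y :: b := by simpa using hb
      exact ⟨pre, m ++ y :: x :: b, by simp,
        .single ⟨pre ++ m, b, x, y, hM, by simp, by simp⟩⟩
  · rcases m with _ | ⟨z, _ | ⟨z', m⟩⟩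
    · obtain ⟨rfl, rfl⟩ : x = i ∧ y :: b = suf := by simpa using hb
      exact ⟨a ++ [y], b, by simp, by simpa using .refl⟩
    · obtain ⟨rfl, rfl, rfl⟩ : x = z ∧ y = i ∧ b = suf := by simpa using hb
      exact ⟨a, x :: b, by simp, by simpa using .refl⟩
    · obtain ⟨rfl, rfl, rfl⟩ : x = z ∧ y = z' ∧ b = m ++ i :: suf := by simpa using hb
      exact ⟨a ++ y :: x :: m, suf, by simp,
        .single ⟨a, m ++ suf, x, y, hM, by simp, by simp⟩⟩

end CommMove

theorem reflTransGen_commMove_wordProd_eq {l₁ l₂ : List B}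
    (h : Relation.ReflTransGen (CommMove M) l₁ l₂) : cs.wordProd l₁ = cs.wordProd l₂ := by
  induction h with
  | refl => rfl
  | tail _ hstep ih => exact ih.trans hstep.wordProd_eq

theorem reflTransGen_commMove_length_eq {l₁ l₂ : List B}
    (h : Relation.ReflTransGen (CommMove M) l₁ l₂) : l₁.length = l₂.length := by
  induction h with
  | refl => rfl
  | tail _ hstep ih => exact ih.trans hstep.length_eq

theorem reflTransGen_commMove_exists_of_append_cons {i : B} {pre suf l : List B}
    (h : Relation.ReflTransGen (CommMove M) (pre ++ i :: suf) l) :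
    ∃ pre' suf', l = pre' ++ i :: suf' ∧
      Relation.ReflTransGen (CommMove M) (pre ++ suf) (pre' ++ suf') := by
  induction h with
  | refl => exact ⟨pre, suf, rfl, .refl⟩
  | tail _ hstep ih =>
    obtain ⟨p, s, rfl, hchain⟩ := ih
    obtain ⟨p', s', rfl, hchain'⟩ := hstep.exists_of_append_cons
    exact ⟨p', s', rfl, hchain.trans hchain'⟩

/- Follow the final letter `s` of a reduced word `l₁ s` of `y` along the commutation moves leading
to `l₂ s`. Deleting it turns them into moves from `l₁` to `l₂`, unless it does not end up last, in
which case deleting it from `l₂ s` leaves a word for `y` of length `ℓ(y) - 1`. -/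
theorem FullyCommutative.mul_simple_of_length_lt {y : W} (hy : FullyCommutative cs y) {i : B}
    (hlt : cs.length (y * cs.simple i) < cs.length y) :
    FullyCommutative cs (y * cs.simple i) := by
  intro l₁ l₂ h₁ h₂
  have hlen : cs.length (y * cs.simple i) + 1 = cs.length y :=
    (cs.length_mul_simple y i).resolve_left (by omega)
  have hprod : ∀ l : List B, cs.wordProd l = y * cs.simple i → cs.wordProd (l ++ [i]) = y :=
    fun l hl => by simp [cs.wordProd_append, hl]
  have hred : ∀ l : List B, cs.IsReduced l ∧ cs.wordProd l = y * cs.simple i →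
      cs.IsReduced (l ++ [i]) ∧ cs.wordProd (l ++ [i]) = y := fun l ⟨hl, hlp⟩ => by
    refine ⟨?_, hprod l hlp⟩
    rw [CoxeterSystem.IsReduced, hprod l hlp, List.length_append, ← hl, hlp]
    simpa using hlen.symm
  obtain ⟨pre, suf, heq, hchain⟩ :=
    reflTransGen_commMove_exists_of_append_cons (hy _ _ (hred l₁ h₁) (hred l₂ h₂))
  rw [List.append_nil] at hchain
  rcases suf.eq_nil_or_concat with rfl | ⟨suf, c, rfl⟩
  · obtain rfl : l₂ = pre := by simpa using heq
    simpa using hchain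
  obtain rfl : i = c := by
    have hsplit : pre ++ i :: suf.concat c = (pre ++ i :: suf) ++ [c] := by simp
    simpa using (List.append_inj' (heq.trans hsplit) rfl).2
  have hword : cs.wordProd (pre ++ suf) = y := by
    have h := (reflTransGen_commMove_wordProd_eq (cs := cs) hchain).symm.trans h₁.2
    simpa [cs.wordProd_append, ← mul_assoc] using congrArg (· * cs.simple i) h
  have hshort := reflTransGen_commMove_length_eq hchain
  have hle := cs.length_wordProd_le (pre ++ suf)
  have hl₁ : cs.length (y * cs.simple i) = l₁.length := h₁.2 ▸ h₁.1
  simp only [hword, List.length_append, List.concat_eq_append, List.length_singleton] at hshort hle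
  omega

theorem aeval_q_injective_s16 : Function.Injective (aeval (R := ℤ) q) := by
  have h : (aeval (R := ℤ) q : ℤ[X] →ₐ[ℤ] A) =
      Polynomial.toLaurentAlg.comp (expand ℤ 2) :=
    Polynomial.algHom_ext (by simp [q])
  rw [h]
  exact Polynomial.toLaurent_injective.comp (expand_injective two_pos)

namespace TLContext

variable {H : Type*} [Ring H] [Algebra A H] {TL : Type*} [Ring TL] [Algebra A TL]
  (Ctx : TLContext cs H TL)

def t (z : W) : TL := Ctx.proj (Ctx.Tw z)

def Dq (x z : W) : A := aeval q (Ctx.D x z)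

theorem linearIndepOn_t : LinearIndepOn A Ctx.t {x | FullyCommutative cs x} := Ctx.t_indep

def lowerFC (z : W) : Finset W :=
  Set.Finite.toFinset (s := {x | FullyCommutative cs x ∧ bruhatLE cs x z})
    ((Ctx.finite_bruhatLE z).subset fun _ hx => hx.2)

variable {Ctx}

theorem mem_lowerFC {x z : W} :
    x ∈ Ctx.lowerFC z ↔ FullyCommutative cs x ∧ bruhatLE cs x z :=
  Set.Finite.mem_toFinset _

theorem mem_lowerFC_of_D_ne_zero {x z : W} (h : Ctx.D x z ≠ 0) : x ∈ Ctx.lowerFC z :=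
  mem_lowerFC.2 (not_not.1 (mt (Ctx.D_eq_zero x z) h))

theorem Dq_eq_zero {x z : W} (h : x ∉ Ctx.lowerFC z) : Ctx.Dq x z = 0 := by
  rw [Dq, not_imp_comm.1 mem_lowerFC_of_D_ne_zero h, map_zero]

variable (Ctx)

theorem t_eq_sum (z : W) : Ctx.t z = ∑ x ∈ Ctx.lowerFC z, Ctx.Dq x z • Ctx.t x := by
  rw [t, Ctx.D_eq z, finsum_mem_eq_finite_toFinset_sum]
  rfl

theorem t_mul_simple_of_lt {y : W} {i : B} (h : cs.length y < cs.length (y * cs.simple i)) :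
    Ctx.t y * Ctx.t (cs.simple i) = Ctx.t (y * cs.simple i) := by
  simp only [t, ← map_mul, Ctx.Tw_mul_simple_of_lt y i h]

theorem t_mul_simple_of_gt {y : W} {i : B} (h : cs.length (y * cs.simple i) < cs.length y) :
    Ctx.t y * Ctx.t (cs.simple i) = q • Ctx.t (y * cs.simple i) + (q - 1) • Ctx.t y := by
  simp only [t, ← map_mul, Ctx.Tw_mul_simple_of_gt y i h, map_add, map_smul]

def Dvec (z : W) : W →₀ A :=
  Finsupp.onFinset (Ctx.lowerFC z) (Ctx.Dq · z) fun _ hx => not_imp_comm.1 Dq_eq_zero hx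

theorem Dvec_apply (x z : W) : Ctx.Dvec z x = Ctx.Dq x z := rfl

theorem Dvec_mem_supported (z : W) :
    Ctx.Dvec z ∈ Finsupp.supported A A {x | FullyCommutative cs x} :=
  fun _ hx => (mem_lowerFC.1 (Finsupp.support_onFinset_subset hx)).1

theorem linearCombination_Dvec (z : W) :
    Finsupp.linearCombination A Ctx.t (Ctx.Dvec z) = Ctx.t z := by
  rw [Dvec, Finsupp.linearCombination_onFinset, ← t_eq_sum]

theorem eq_Dvec_of_linearCombination_eq {l : W →₀ A} {z : W}
    (hl : l ∈ Finsupp.supported A A {x | FullyCommutative cs x})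
    (h : Finsupp.linearCombination A Ctx.t l = Ctx.t z) : l = Ctx.Dvec z :=
  linearIndepOn_iffₛ.1 Ctx.linearIndepOn_t l hl _ (Ctx.Dvec_mem_supported z)
    (h.trans (Ctx.linearCombination_Dvec z).symm)

theorem Dvec_of_fullyCommutative {z : W} (hz : FullyCommutative cs z) :
    Ctx.Dvec z = Finsupp.single z 1 :=
  (Ctx.eq_Dvec_of_linearCombination_eq (Finsupp.single_mem_supported A 1 hz) (by simp)).symm

def mulSimpleCoeffs (i : B) (y : W) : W →₀ A :=
  if cs.length (y * cs.simple i) < cs.length y then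
    Finsupp.single (y * cs.simple i) q + Finsupp.single y (q - 1)
  else Ctx.Dvec (y * cs.simple i)

theorem linearCombination_mulSimpleCoeffs (i : B) (y : W) :
    Finsupp.linearCombination A Ctx.t (Ctx.mulSimpleCoeffs i y) =
      Ctx.t y * Ctx.t (cs.simple i) := by
  unfold mulSimpleCoeffs
  split_ifs with h
  · simp [Ctx.t_mul_simple_of_gt h, sub_smul]
  · rw [linearCombination_Dvec, t_mul_simple_of_lt]
    have := cs.length_mul_simple y i
    omega

theorem mulSimpleCoeffs_mem_supported {i : B} {y : W} (hy : FullyCommutative cs y) :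
    Ctx.mulSimpleCoeffs i y ∈ Finsupp.supported A A {x | FullyCommutative cs x} := by
  unfold mulSimpleCoeffs
  split_ifs with h
  · exact add_mem (Finsupp.single_mem_supported A _ (hy.mul_simple_of_length_lt h))
      (Finsupp.single_mem_supported A _ hy)
  · exact Ctx.Dvec_mem_supported _

theorem Dvec_mul_simple {v : W} {i : B} (hv : cs.length v < cs.length (v * cs.simple i)) :
    Ctx.Dvec (v * cs.simple i) = ∑ y ∈ Ctx.lowerFC v, Ctx.Dq y v • Ctx.mulSimpleCoeffs i y := by
  refine (Ctx.eq_Dvec_of_linearCombination_eq (Submodule.sum_mem _ fun y hy =>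
    Submodule.smul_mem _ _ (Ctx.mulSimpleCoeffs_mem_supported (mem_lowerFC.1 hy).1)) ?_).symm
  simp only [map_sum, map_smul, linearCombination_mulSimpleCoeffs, ← smul_mul_assoc,
    ← Finset.sum_mul, ← t_eq_sum, t_mul_simple_of_lt _ hv]

open Classical in
theorem mulSimpleCoeffs_apply {i : B} {x : W} (hx : FullyCommutative cs x) (y : W) :
    Ctx.mulSimpleCoeffs i y x =
      (if y = x * cs.simple i then
        (if cs.length x < cs.length (x * cs.simple i) then q else 1) else 0) +
      (if y = x then (if cs.length (x * cs.simple i) < cs.length x then q - 1 else 0) else 0) +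
      (if cs.length y < cs.length (y * cs.simple i) ∧ ¬ FullyCommutative cs (y * cs.simple i)
        then Ctx.Dq x (y * cs.simple i) else 0) := by
  have hy := cs.length_mul_simple y i
  have hyx : y * cs.simple i = x ↔ y = x * cs.simple i := by
    constructor <;> rintro rfl <;> simp
  unfold mulSimpleCoeffs
  by_cases hdesc : cs.length (y * cs.simple i) < cs.length y
  · have hasc : ¬ (cs.length y < cs.length (y * cs.simple i) ∧
        ¬ FullyCommutative cs (y * cs.simple i)) := by omega
    rw [if_pos hdesc, if_neg hasc, add_zero]
    simp only [Finsupp.add_apply, Finsupp.single_apply, hyx]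
    congr 1
    · by_cases e : y = x * cs.simple i
      · subst e
        rw [cs.simple_mul_simple_cancel_right] at hdesc
        simp [hdesc]
      · simp [e]
    · by_cases e : y = x
      · subst e
        simp [hdesc]
      · simp [e]
  have hasc : cs.length y < cs.length (y * cs.simple i) := by omega
  have hx_term : (if y = x then (if cs.length (x * cs.simple i) < cs.length x then q - 1 else 0)
      else 0) = 0 := by
    split_ifs with e <;> first | rfl | (subst e; omega)
  rw [if_neg hdesc, hx_term, add_zero]
  by_cases hfc : FullyCommutative cs (y * cs.simple i)
  · have hfc' : ¬ (cs.length y < cs.length (y * cs.simple i) ∧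
        ¬ FullyCommutative cs (y * cs.simple i)) := fun h => h.2 hfc
    rw [Ctx.Dvec_of_fullyCommutative hfc, if_neg hfc', add_zero, Finsupp.single_apply, hyx]
    by_cases e : y = x * cs.simple i
    · subst e
      rw [cs.simple_mul_simple_cancel_right] at hasc
      simp [hasc.le.not_gt]
    · simp [e]
  · have hne : y ≠ x * cs.simple i := fun e => by
      rw [e, cs.simple_mul_simple_cancel_right] at hfc
      exact hfc hx
    rw [if_pos (⟨hasc, hfc⟩ : _ ∧ _), Dvec_apply, if_neg hne, zero_add]

open Classical in
theorem Dq_mul_simple {v x : W} {i : B} (hv : cs.length v < cs.length (v * cs.simple i))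
    (hx : FullyCommutative cs x) :
    Ctx.Dq x (v * cs.simple i) =
      Ctx.Dq (x * cs.simple i) v * (if cs.length x < cs.length (x * cs.simple i) then q else 1) +
      Ctx.Dq x v * (if cs.length (x * cs.simple i) < cs.length x then q - 1 else 0) +
      ∑ y ∈ (Ctx.lowerFC v).filter (fun y => cs.length y < cs.length (y * cs.simple i) ∧
          ¬ FullyCommutative cs (y * cs.simple i)),
        Ctx.Dq x (y * cs.simple i) * Ctx.Dq y v := by
  have hsingle (a : W) (c : A) :
      ∑ y ∈ Ctx.lowerFC v, Ctx.Dq y v * (if y = a then c else 0) = Ctx.Dq a v * c := by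
    rw [Finset.sum_eq_single a (fun b _ hb => by simp [hb]) fun ha => by simp [Dq_eq_zero ha]]
    simp
  rw [← Dvec_apply, Ctx.Dvec_mul_simple hv, Finsupp.finsetSum_apply]
  simp only [Finsupp.smul_apply, smul_eq_mul, Ctx.mulSimpleCoeffs_apply hx, mul_add,
    Finset.sum_add_distrib, hsingle, Finset.sum_filter]
  congr 1
  refine Finset.sum_congr rfl fun y _ => ?_
  rw [mul_ite, mul_zero, mul_comm]

theorem D_mul_simple {v x : W} {i : B} (hv : cs.length v < cs.length (v * cs.simple i))
    (hx : FullyCommutative cs x) :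
    Ctx.D x (v * cs.simple i) =
      Ctx.D (x * cs.simple i) v * (if cs.length x < cs.length (x * cs.simple i) then X else 1) +
      Ctx.D x v * (if cs.length (x * cs.simple i) < cs.length x then X - 1 else 0) +
      ∑ᶠ y ∈ {y | FullyCommutative cs y ∧ ¬ FullyCommutative cs (y * cs.simple i) ∧
          cs.length y < cs.length (y * cs.simple i)},
        Ctx.D x (y * cs.simple i) * Ctx.D y v := by
  classical
  rw [finsum_mem_eq_sum_of_subset _ (t := (Ctx.lowerFC v).filter fun y =>
      cs.length y < cs.length (y * cs.simple i) ∧ ¬ FullyCommutative cs (y * cs.simple i))]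
  · apply aeval_q_injective_s16
    simpa [apply_ite (aeval q), Dq] using Ctx.Dq_mul_simple hv hx
  · rintro y ⟨⟨-, hfc, hlt⟩, hD⟩
    exact Finset.mem_filter.2 ⟨mem_lowerFC_of_D_ne_zero (right_ne_zero_of_mul hD), hlt, hfc⟩
  · intro y hy
    obtain ⟨hy, hlt, hfc⟩ := Finset.mem_filter.1 hy
    exact ⟨(mem_lowerFC.1 hy).1, hfc, hlt⟩

end TLContext

theorem statement16_general {B : Type*} {W : Type*} [Group W] {M : CoxeterMatrix B} {cs : CoxeterSystem M W}
    {H : Type*} [Ring H] [Algebra A H] {TL : Type*} [Ring TL] [Algebra A TL]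
    (Ctx : TLContext cs H TL)
    (w : W) (i : B)
    (hws : cs.length (w * cs.simple i) < cs.length w)
    (x : W) (hx : FullyCommutative cs x) :
    (cs.length (x * cs.simple i) < cs.length x →
      Ctx.D x w = Ctx.D (x * cs.simple i) (w * cs.simple i) +
        (Polynomial.X - 1) * Ctx.D x (w * cs.simple i) +
        ∑ᶠ y ∈ {y | FullyCommutative cs y ∧ ¬ FullyCommutative cs (y * cs.simple i) ∧
            cs.length y < cs.length (y * cs.simple i)},
          Ctx.D x (y * cs.simple i) * Ctx.D y (w * cs.simple i)) ∧
    (cs.length x < cs.length (x * cs.simple i) →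
      FullyCommutative cs (x * cs.simple i) →
      Ctx.D x w = Polynomial.X * Ctx.D (x * cs.simple i) (w * cs.simple i) +
        ∑ᶠ y ∈ {y | FullyCommutative cs y ∧ ¬ FullyCommutative cs (y * cs.simple i) ∧
            cs.length y < cs.length (y * cs.simple i)},
          Ctx.D x (y * cs.simple i) * Ctx.D y (w * cs.simple i)) ∧
    (cs.length x < cs.length (x * cs.simple i) →
      ¬ FullyCommutative cs (x * cs.simple i) →
      Ctx.D x w =
        ∑ᶠ y ∈ {y | FullyCommutative cs y ∧ ¬ FullyCommutative cs (y * cs.simple i) ∧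
            cs.length y < cs.length (y * cs.simple i)},
          Ctx.D x (y * cs.simple i) * Ctx.D y (w * cs.simple i)) := by
  have hv : cs.length (w * cs.simple i) < cs.length (w * cs.simple i * cs.simple i) := by
    rwa [cs.simple_mul_simple_cancel_right]
  have hD := Ctx.D_mul_simple hv hx
  rw [cs.simple_mul_simple_cancel_right] at hD
  refine ⟨fun hlt => ?_, fun hlt _ => ?_, fun hlt hnfc => ?_⟩
  · rw [hD, if_neg hlt.asymm, if_pos hlt]
    ring
  · rw [hD, if_pos hlt, if_neg hlt.asymm]
    ring
  · rw [hD, if_pos hlt, if_neg hlt.asymm, Ctx.D_eq_zero _ _ fun h => hnfc h.1]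
    ring

/-- Theorem (paper, Thm. `p-gc`): recursion for the `D`-polynomials, for an arbitrary
Coxeter graph `X`: if `w ∉ W_c`, `s ∈ S`, `ws < w`, `ws ∉ W_c`, then for all `x ∈ W_c`
with `x ≤ w`, `D_{x,w} = D̃_{x,w} + Σ_{y ∈ W_c, ys ∉ W_c, ys > y} D_{x,ys} D_{y,ws}`,
where `D̃_{x,w} = D_{xs,ws} + (q-1) D_{x,ws}` if `xs < x`; `= q D_{xs,ws}` if
`x < xs ∈ W_c`; `= 0` if `x < xs ∉ W_c`. -/
theorem statement16 {B : Type*} {W : Type*} [Group W] {M : CoxeterMatrix B} {cs : CoxeterSystem M W}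
    {H : Type*} [Ring H] [Algebra A H] {TL : Type*} [Ring TL] [Algebra A TL]
    (Ctx : TLContext cs H TL)
    (w : W) (hw : ¬ FullyCommutative cs w) (i : B)
    (hws : cs.length (w * cs.simple i) < cs.length w)
    (hwsc : ¬ FullyCommutative cs (w * cs.simple i))
    (x : W) (hx : FullyCommutative cs x) (hxw : bruhatLE cs x w) :
    (cs.length (x * cs.simple i) < cs.length x →
      Ctx.D x w = Ctx.D (x * cs.simple i) (w * cs.simple i) +
        (Polynomial.X - 1) * Ctx.D x (w * cs.simple i) +
        ∑ᶠ y ∈ {y | FullyCommutative cs y ∧ ¬ FullyCommutative cs (y * cs.simple i) ∧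
            cs.length y < cs.length (y * cs.simple i)},
          Ctx.D x (y * cs.simple i) * Ctx.D y (w * cs.simple i)) ∧
    (cs.length x < cs.length (x * cs.simple i) →
      FullyCommutative cs (x * cs.simple i) →
      Ctx.D x w = Polynomial.X * Ctx.D (x * cs.simple i) (w * cs.simple i) +
        ∑ᶠ y ∈ {y | FullyCommutative cs y ∧ ¬ FullyCommutative cs (y * cs.simple i) ∧
            cs.length y < cs.length (y * cs.simple i)},
          Ctx.D x (y * cs.simple i) * Ctx.D y (w * cs.simple i)) ∧
    (cs.length x < cs.length (x * cs.simple i) →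
      ¬ FullyCommutative cs (x * cs.simple i) →
      Ctx.D x w =
        ∑ᶠ y ∈ {y | FullyCommutative cs y ∧ ¬ FullyCommutative cs (y * cs.simple i) ∧
            cs.length y < cs.length (y * cs.simple i)},
          Ctx.D x (y * cs.simple i) * Ctx.D y (w * cs.simple i)) :=
  statement16_general Ctx w i hws x hx

end TLPaper
end
end

section
/- Let X be an arbitrary Coxeter graph. For every x, w ∈ W_c(X), L_{x,w}(q^{-1/2}) = Σ_{y ∈ [x,w]_c} q^{(ℓ(x)−ℓ(y))/2} a_{x,y}(q) L_{y,w}(q^{1/2}), where [x,w]_c = {y ∈ W_c(X) : x ≤ y ≤ w}. -/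
/-!
Common setup: Coxeter systems, Bruhat order, fully commutative elements,
the Hecke algebra `H(X)`, the generalized Temperley--Lieb algebra `TL(X)`,
and the polynomial families `R`, `P` (Kazhdan--Lusztig), `D`, `a`, `L`.
-/

open LaurentPolynomial Polynomial

noncomputable section

namespace TLPaper

variable {B : Type*} {W : Type*} [Group W] {M : CoxeterMatrix B} (cs : CoxeterSystem M W)

section AuxLemmas

lemma invert_aeval_negone (p : Polynomial ℤ) :
    LaurentPolynomial.invert (R := ℤ)
      (Polynomial.aeval (R := ℤ) ((LaurentPolynomial.T (-1) : A)) p)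
    = Polynomial.aeval (R := ℤ) ((LaurentPolynomial.T 1 : A)) p := by
  rw [← Polynomial.aeval_algHom_apply (LaurentPolynomial.invert (R := ℤ) : A ≃ₐ[ℤ] A) _ p,
    LaurentPolynomial.invert_T, neg_neg]

lemma bruhatLE_trans {B : Type*} {W : Type*} [Group W] {M : CoxeterMatrix B}
    {cs : CoxeterSystem M W} {x y z : W} (h1 : bruhatLE cs x y) (h2 : bruhatLE cs y z) :
    bruhatLE cs x z := Relation.ReflTransGen.trans h1 h2

end AuxLemmas

/-- (paper, equation `lpolapol`): for an arbitrary Coxeter graph `X` and all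
`x, w ∈ W_c`, `L_{x,w}(q^{-1/2}) = Σ_{y ∈ [x,w]_c} q^{(ℓ(x)-ℓ(y))/2} a_{x,y}(q)
L_{y,w}(q^{1/2})`. -/
theorem statement17 {B : Type*} {W : Type*} [Group W] {M : CoxeterMatrix B} {cs : CoxeterSystem M W}
    {H : Type*} [Ring H] [Algebra A H] {TL : Type*} [Ring TL] [Algebra A TL]
    (Ctx : TLContext cs H TL)
    (x w : W) (hx : FullyCommutative cs x) (hw : FullyCommutative cs w) :
    Ctx.Lq x w =
      ∑ᶠ y ∈ {y | FullyCommutative cs y ∧ bruhatLE cs x y ∧ bruhatLE cs y w},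
        (LaurentPolynomial.T ((cs.length x : ℤ) - (cs.length y : ℤ)) : A) *
          Polynomial.aeval q (Ctx.apol x y) * Ctx.Lq' y w := by
  classical
  have hSfin : ({y | FullyCommutative cs y ∧ bruhatLE cs y w} : Set W).Finite :=
    (Ctx.finite_bruhatLE w).subset (fun y hy => hy.2)
  set s : Finset W := hSfin.toFinset with hsdef
  have hmem : ∀ y : W, y ∈ s ↔ (FullyCommutative cs y ∧ bruhatLE cs y w) := by
    intro y; rw [hsdef, Set.Finite.mem_toFinset]; rfl
  set t : W → TL := fun y => Ctx.proj (Ctx.Tw y) with htdef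
  have hc : Ctx.c w = ∑ y ∈ s, (((LaurentPolynomial.T (-(cs.length y : ℤ)) : A) *
      Ctx.Lq y w) • t y) := by
    rw [Ctx.c_eq w hw, finsum_mem_eq_finite_toFinset_sum _ hSfin]
    rfl
  have hTinv : ∀ z ∈ s, Ctx.proj (Ctx.Tinv z⁻¹) =
      ∑ y ∈ s, (((LaurentPolynomial.T (-2 * (cs.length z : ℤ)) : A) *
        Polynomial.aeval q (Ctx.apol y z)) • t y) := by
    intro z hz
    obtain ⟨hzfc, hzw⟩ := (hmem z).1 hz
    have hSz : ({y | FullyCommutative cs y ∧ bruhatLE cs y z} : Set W).Finite :=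
      (Ctx.finite_bruhatLE z).subset (fun y hy => hy.2)
    rw [Ctx.apol_eq z hzfc, finsum_mem_eq_finite_toFinset_sum _ hSz]
    have hsub : hSz.toFinset ⊆ s := by
      intro y hy
      rw [Set.Finite.mem_toFinset] at hy
      exact (hmem y).2 ⟨hy.1, bruhatLE_trans hy.2 hzw⟩
    rw [Finset.smul_sum, Finset.sum_subset hsub ?_]
    · refine Finset.sum_congr rfl (fun y _ => ?_)
      rw [smul_smul]
    · intro y hy hy2
      rw [Set.Finite.mem_toFinset] at hy2
      have h0 : Ctx.apol y z = 0 :=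
        Ctx.apol_eq_zero y z (fun hcon => hy2 ⟨hcon.1, hcon.2.2⟩)
      rw [h0, map_zero, zero_smul, smul_zero]
  have hinv : ∀ y : W, LaurentPolynomial.invert (R := ℤ)
      ((LaurentPolynomial.T (-(cs.length y : ℤ)) : A) * Ctx.Lq y w)
      = (LaurentPolynomial.T (cs.length y : ℤ) : A) * Ctx.Lq' y w := by
    intro y
    rw [map_mul, LaurentPolynomial.invert_T, neg_neg]
    congr 1
    exact invert_aeval_negone (Ctx.L y w)
  have hiota : Ctx.c w =
      ∑ y ∈ s, ((∑ z ∈ s, (LaurentPolynomial.T (-(cs.length z : ℤ)) : A) *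
        Polynomial.aeval q (Ctx.apol y z) * Ctx.Lq' z w) • t y) := by
    conv_lhs => rw [← Ctx.c_invariant w hw, hc]
    rw [map_sum]
    have hterm : ∀ z ∈ s, Ctx.iotaTL
        (((LaurentPolynomial.T (-(cs.length z : ℤ)) : A) * Ctx.Lq z w) • t z)
        = ∑ y ∈ s, ((((LaurentPolynomial.T (cs.length z : ℤ) : A) * Ctx.Lq' z w) *
            ((LaurentPolynomial.T (-2 * (cs.length z : ℤ)) : A) *
              Polynomial.aeval q (Ctx.apol y z))) • t y) := by
      intro z hz
      rw [Ctx.iotaTL_smul, htdef]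
      simp only
      rw [Ctx.iotaTL_t, hinv z, hTinv z hz, Finset.smul_sum]
      refine Finset.sum_congr rfl (fun y _ => ?_)
      rw [smul_smul]
    rw [Finset.sum_congr rfl hterm, Finset.sum_comm]
    refine Finset.sum_congr rfl (fun y _ => ?_)
    rw [← Finset.sum_smul]
    congr 1
    refine Finset.sum_congr rfl (fun z _ => ?_)
    have hT : (LaurentPolynomial.T (cs.length z : ℤ) : A) *
        (LaurentPolynomial.T (-2 * (cs.length z : ℤ)) : A)
        = (LaurentPolynomial.T (-(cs.length z : ℤ)) : A) := by
      rw [← LaurentPolynomial.T_add]; ring_nf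
    calc (LaurentPolynomial.T (cs.length z : ℤ) : A) * Ctx.Lq' z w *
        ((LaurentPolynomial.T (-2 * (cs.length z : ℤ)) : A) *
          Polynomial.aeval q (Ctx.apol y z))
        = ((LaurentPolynomial.T (cs.length z : ℤ) : A) *
            (LaurentPolynomial.T (-2 * (cs.length z : ℤ)) : A)) *
            Polynomial.aeval q (Ctx.apol y z) * Ctx.Lq' z w := by ring
      _ = _ := by rw [hT]
  -- coefficient comparison via linear independence
  set G : W → A := fun u => ((LaurentPolynomial.T (-(cs.length u : ℤ)) : A) * Ctx.Lq u w)
    - ∑ z ∈ s, (LaurentPolynomial.T (-(cs.length z : ℤ)) : A) *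
        Polynomial.aeval q (Ctx.apol u z) * Ctx.Lq' z w with hGdef
  have hzero : ∑ y ∈ s, G y • t y = 0 := by
    rw [hGdef]
    simp only [sub_smul, Finset.sum_sub_distrib]
    rw [← hc, ← hiota, sub_self]
  have key : ∀ y ∈ s, (LaurentPolynomial.T (-(cs.length y : ℤ)) : A) * Ctx.Lq y w
      = ∑ z ∈ s, (LaurentPolynomial.T (-(cs.length z : ℤ)) : A) *
          Polynomial.aeval q (Ctx.apol y z) * Ctx.Lq' z w := by
    intro y hy
    have hfc : FullyCommutative cs y := ((hmem y).1 hy).1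
    have hzero' : ∑ i ∈ s.subtype (FullyCommutative cs),
        (fun i : {u : W // FullyCommutative cs u} => G i.1) i •
          (fun i : {u : W // FullyCommutative cs u} => Ctx.proj (Ctx.Tw i.1)) i = 0 := by
      rw [Finset.sum_subtype_of_mem (fun u => G u • t u)
        (fun u hu => ((hmem u).1 hu).1)]
      exact hzero
    have hy' : (⟨y, hfc⟩ : {u : W // FullyCommutative cs u}) ∈
        s.subtype (FullyCommutative cs) := by
      rw [Finset.mem_subtype]; exact hy
    have hG0 : G y = 0 :=
      (linearIndependent_iff'.mp Ctx.t_indep) (s.subtype (FullyCommutative cs))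
        (fun i => G i.1) hzero' ⟨y, hfc⟩ hy'
    rw [hGdef] at hG0
    exact sub_eq_zero.mp hG0
  by_cases hxw : bruhatLE cs x w
  · have hxs : x ∈ s := (hmem x).2 ⟨hx, hxw⟩
    have hkey := key x hxs
    have hS'fin : ({y | FullyCommutative cs y ∧ bruhatLE cs x y ∧ bruhatLE cs y w} :
        Set W).Finite := hSfin.subset (fun y hy => ⟨hy.1, hy.2.2⟩)
    rw [finsum_mem_eq_finite_toFinset_sum _ hS'fin]
    have hsub : hS'fin.toFinset ⊆ s := by
      intro y hy
      rw [Set.Finite.mem_toFinset] at hy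
      exact (hmem y).2 ⟨hy.1, hy.2.2⟩
    rw [Finset.sum_subset hsub ?_]
    · calc Ctx.Lq x w
          = (LaurentPolynomial.T (cs.length x : ℤ) : A) *
            ((LaurentPolynomial.T (-(cs.length x : ℤ)) : A) * Ctx.Lq x w) := by
            rw [← mul_assoc, ← LaurentPolynomial.T_add, add_neg_cancel,
              LaurentPolynomial.T_zero, one_mul]
        _ = ∑ y ∈ s, (LaurentPolynomial.T ((cs.length x : ℤ) - (cs.length y : ℤ)) : A) *
              Polynomial.aeval q (Ctx.apol x y) * Ctx.Lq' y w := by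
            rw [hkey, Finset.mul_sum]
            refine Finset.sum_congr rfl (fun y _ => ?_)
            rw [LaurentPolynomial.T_sub]
            ring
    · intro y hy hy2
      rw [Set.Finite.mem_toFinset] at hy2
      obtain ⟨hyf, hyw⟩ := (hmem y).1 hy
      have h0 : Ctx.apol x y = 0 :=
        Ctx.apol_eq_zero x y (fun hcon => hy2 ⟨hyf, hcon.2.2, hyw⟩)
      rw [h0, map_zero, mul_zero, zero_mul]
  · have hL : Ctx.L x w = 0 := Ctx.L_eq_zero x w (fun hcon => hxw hcon.2.2)
    have hset : {y | FullyCommutative cs y ∧ bruhatLE cs x y ∧ bruhatLE cs y w}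
        = (∅ : Set W) := by
      ext y
      simp only [Set.mem_setOf_eq, Set.mem_empty_iff_false, iff_false, not_and]
      intro _ hcon1 hcon2
      exact hxw (bruhatLE_trans hcon1 hcon2)
    rw [hset, finsum_mem_empty]
    simp only [TLContext.Lq, hL, map_zero]


end TLPaper
end
end

section
/- Let X be a Coxeter graph satisfying condition (★) and let x, w ∈ W_c(X). Then the coefficient M(x,w) of q^{-1/2} in L_{x,w}(q^{-1/2}) equals the coefficient μ(x,w) of q^{(ℓ(w)−ℓ(x)−1)/2} in the Kazhdan–Lusztig polynomial P_{x,w}(q). -/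
/-!
Common setup: Coxeter systems, Bruhat order, fully commutative elements,
the Hecke algebra `H(X)`, the generalized Temperley--Lieb algebra `TL(X)`,
and the polynomial families `R`, `P` (Kazhdan--Lusztig), `D`, `a`, `L`.
-/

open LaurentPolynomial Polynomial

noncomputable section

namespace TLPaper

variable {B : Type*} {W : Type*} [Group W] {M : CoxeterMatrix B} (cs : CoxeterSystem M W)

/-!
Expanding `σ(C'_w)` in the basis `t_x` of `TL(X)` through `σ(T_y) = Σ_x D_{x,y} t_x` gives
`t_x`-coefficients `q^{-ℓ(w)/2} Σ_y P_{y,w} D_{x,y}`. By (★) these equal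
`q^{-ℓ(x)/2} L_{x,w}` when `w` is fully commutative and vanish otherwise. The vanishing
yields, by induction on `ℓ(y)`, `deg D_{x,y} < (ℓ(y) - ℓ(x))/2` for `x < y`, while
`D_{x,w} = 0` for fully commutative `w ≠ x`. So in
`Σ_y P_{y,w} D_{x,y} = q^{(ℓ(w)-ℓ(x))/2} L_{x,w}(q^{-1/2})` only the term `y = x` reaches
degree `(ℓ(w)-ℓ(x)-1)/2` on the left, where it contributes `μ(x,w)`; on the right that
degree carries `M(x,w)`.
-/

section LaurentCoeff

variable {R : Type*} [CommSemiring R]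

lemma coeff_toLaurent_natCast (p : R[X]) (n : ℕ) : (toLaurent p).coeff n = p.coeff n := by
  rw [coeff_toLaurent, ← Nat.castEmbedding_apply,
    Finsupp.mapDomain_apply Nat.castEmbedding.injective]
  rfl

lemma aeval_T_two (p : R[X]) : aeval (T 2 : R[T;T⁻¹]) p = toLaurent (expand R 2 p) := by
  rw [← toLaurentAlg_apply, ← AlgHom.comp_apply]
  congr 1
  ext
  simp

lemma coeff_aeval_T_two_natCast (p : R[X]) (n : ℕ) :
    (aeval (T 2 : R[T;T⁻¹]) p).coeff n = if 2 ∣ n then p.coeff (n / 2) else 0 := by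
  rw [aeval_T_two, coeff_toLaurent_natCast, coeff_expand two_pos]

lemma aeval_T_two_injective :
    Function.Injective (aeval (T 2 : R[T;T⁻¹]) : R[X] → R[T;T⁻¹]) := by
  intro p p' h
  simp only [aeval_T_two] at h
  exact expand_injective two_pos (toLaurent_injective h)

lemma aeval_T_neg_one (p : R[X]) : aeval (T (-1) : R[T;T⁻¹]) p = invert (toLaurent p) := by
  rw [← toLaurentAlg_apply, ← AlgHom.coe_coe invert, ← AlgHom.comp_apply]
  congr 1
  ext
  simp

lemma coeff_T_mul_aeval_T_neg_one (p : R[X]) (m : ℤ) (j : ℕ) :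
    (T m * aeval (T (-1) : R[T;T⁻¹]) p).coeff (m - j) = p.coeff j := by
  rw [aeval_T_neg_one, T, sub_eq_add_neg, AddMonoidAlgebra.coeff_single_mul_add, one_mul,
    invert_apply, neg_neg, coeff_toLaurent_natCast]

end LaurentCoeff

section Bruhat

variable {B : Type*} {W : Type*} [Group W] {M : CoxeterMatrix B} {cs : CoxeterSystem M W}

lemma length_le_of_bruhatLE {x w : W} (h : bruhatLE cs x w) : cs.length x ≤ cs.length w := by
  induction h with
  | refl => exact le_rfl
  | tail _ hstep ih => exact ih.trans hstep.2.le

lemma length_lt_of_bruhatLT {x w : W} (h : bruhatLT cs x w) : cs.length x < cs.length w := by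
  obtain rfl | ⟨y, hxy, hyw⟩ := Relation.ReflTransGen.cases_head h.1
  · exact absurd rfl h.2
  · exact hxy.2.trans_le (length_le_of_bruhatLE hyw)

end Bruhat

namespace TLContext

variable {B : Type*} {W : Type*} [Group W] {M : CoxeterMatrix B} {cs : CoxeterSystem M W}
  {H : Type*} [Ring H] [Algebra A H] {TL : Type*} [Ring TL] [Algebra A TL]
  (Ctx : TLContext cs H TL)

def lowerFinset (w : W) : Finset W := (Ctx.finite_bruhatLE w).toFinset

open Classical in
def fcLowerFinset (w : W) : Finset W := {x ∈ Ctx.lowerFinset w | FullyCommutative cs x}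

def projKLCoeff (x w : W) : ℤ[X] := ∑ y ∈ Ctx.lowerFinset w, Ctx.P y w * Ctx.D x y

variable {Ctx}

lemma mem_lowerFinset {x w : W} : x ∈ Ctx.lowerFinset w ↔ bruhatLE cs x w :=
  Set.Finite.mem_toFinset _

lemma mem_fcLowerFinset {x w : W} :
    x ∈ Ctx.fcLowerFinset w ↔ FullyCommutative cs x ∧ bruhatLE cs x w := by
  classical
  simp [fcLowerFinset, mem_lowerFinset, and_comm]

lemma eq_of_sum_smul_proj_Tw_eq {s : Finset W} (hs : ∀ y ∈ s, FullyCommutative cs y)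
    {f g : W → A}
    (h : ∑ y ∈ s, f y • Ctx.proj (Ctx.Tw y) = ∑ y ∈ s, g y • Ctx.proj (Ctx.Tw y)) :
    ∀ y ∈ s, f y = g y := by
  have hindep : LinearIndepOn A (fun y => Ctx.proj (Ctx.Tw y)) {y | FullyCommutative cs y} :=
    Ctx.t_indep
  exact linearIndepOn_finset_iffₛ.mp (hindep.mono hs) f g h

lemma proj_Tw_eq_sum {y w : W} (hyw : bruhatLE cs y w) :
    Ctx.proj (Ctx.Tw y) =
      ∑ x ∈ Ctx.fcLowerFinset w, aeval q (Ctx.D x y) • Ctx.proj (Ctx.Tw x) := by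
  rw [Ctx.D_eq y, finsum_mem_eq_finite_toFinset_sum _
    ((Ctx.finite_bruhatLE y).subset fun _ hx => hx.2)]
  refine Finset.sum_subset (fun x hx => ?_) fun x _ hx => ?_
  · rw [Set.Finite.mem_toFinset] at hx
    exact mem_fcLowerFinset.mpr ⟨hx.1, hx.2.trans hyw⟩
  · rw [Set.Finite.mem_toFinset] at hx
    rw [Ctx.D_eq_zero x y hx, map_zero, zero_smul]

lemma c_eq_sum {w : W} (hw : FullyCommutative cs w) :
    Ctx.c w = ∑ x ∈ Ctx.fcLowerFinset w,
      ((T (-(cs.length x : ℤ)) : A) * Ctx.Lq x w) • Ctx.proj (Ctx.Tw x) := by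
  rw [Ctx.c_eq w hw, finsum_mem_eq_finite_toFinset_sum _
    ((Ctx.finite_bruhatLE w).subset fun _ hx => hx.2)]
  exact Finset.sum_congr (by ext; simp [mem_fcLowerFinset]) fun _ _ => rfl

lemma D_eq_zero_of_ne {x w : W} (hw : FullyCommutative cs w) (hne : x ≠ w) :
    Ctx.D x w = 0 := by
  classical
  by_cases hx : x ∈ Ctx.fcLowerFinset w
  · have h : ∑ y ∈ Ctx.fcLowerFinset w, aeval q (Ctx.D y w) • Ctx.proj (Ctx.Tw y) =
        ∑ y ∈ Ctx.fcLowerFinset w, (if y = w then 1 else 0 : A) • Ctx.proj (Ctx.Tw y) := by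
      simp only [← proj_Tw_eq_sum .refl, ite_smul, one_smul, zero_smul, Finset.sum_ite_eq',
        if_pos (mem_fcLowerFinset.mpr ⟨hw, .refl⟩)]
    have := eq_of_sum_smul_proj_Tw_eq (fun y hy => (mem_fcLowerFinset.mp hy).1) h x hx
    rw [if_neg hne] at this
    exact aeval_T_two_injective (by rw [map_zero]; exact this)
  · exact Ctx.D_eq_zero x w (mem_fcLowerFinset.not.mp hx)

lemma proj_KL_eq_sum (w : W) :
    Ctx.proj (Ctx.KL w) = ∑ x ∈ Ctx.fcLowerFinset w,
      ((T (-(cs.length w : ℤ)) : A) * aeval q (Ctx.projKLCoeff x w)) • Ctx.proj (Ctx.Tw x) := by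
  calc Ctx.proj (Ctx.KL w)
      = (T (-(cs.length w : ℤ)) : A) • ∑ y ∈ Ctx.lowerFinset w, aeval q (Ctx.P y w) •
          ∑ x ∈ Ctx.fcLowerFinset w, aeval q (Ctx.D x y) • Ctx.proj (Ctx.Tw x) := by
        rw [KL, map_smul, finsum_mem_eq_finite_toFinset_sum _ (Ctx.finite_bruhatLE w), map_sum]
        refine congrArg _ (Finset.sum_congr rfl fun y hy => ?_)
        rw [map_smul, ← proj_Tw_eq_sum (mem_lowerFinset.mp hy)]
    _ = _ := by
        simp only [Finset.smul_sum, smul_smul]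
        rw [Finset.sum_comm]
        simp only [projKLCoeff, map_sum, map_mul, Finset.mul_sum, Finset.sum_smul]

lemma aeval_projKLCoeff_of_fullyCommutative (hstar : Ctx.Star) {x w : W}
    (hw : FullyCommutative cs w) (hx : x ∈ Ctx.fcLowerFinset w) :
    aeval q (Ctx.projKLCoeff x w) = T ((cs.length w : ℤ) - cs.length x) * Ctx.Lq x w := by
  have h := eq_of_sum_smul_proj_Tw_eq (fun y hy => (mem_fcLowerFinset.mp hy).1)
    (((proj_KL_eq_sum w).symm.trans (hstar.1 w hw)).trans (c_eq_sum hw)) x hx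
  calc aeval q (Ctx.projKLCoeff x w)
      = T (cs.length w : ℤ) * (T (-(cs.length w : ℤ)) * aeval q (Ctx.projKLCoeff x w)) := by
        rw [← mul_assoc, ← T_add, add_neg_cancel, T_zero, one_mul]
    _ = T ((cs.length w : ℤ) - cs.length x) * Ctx.Lq x w := by
        rw [h, ← mul_assoc, ← T_add, sub_eq_add_neg]

lemma projKLCoeff_eq_zero_of_not_fullyCommutative (hstar : Ctx.Star) {x w : W}
    (hw : ¬ FullyCommutative cs w) (hx : x ∈ Ctx.fcLowerFinset w) :
    Ctx.projKLCoeff x w = 0 := by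
  have h := eq_of_sum_smul_proj_Tw_eq (fun y hy => (mem_fcLowerFinset.mp hy).1)
    (g := 0) (by rw [← proj_KL_eq_sum, hstar.2 w hw]; simp) x hx
  rw [Pi.zero_apply, (isUnit_T _).mul_right_eq_zero] at h
  exact aeval_T_two_injective (by rw [map_zero]; exact h)

lemma two_mul_natDegree_D_lt (hstar : Ctx.Star) {x y : W} (hx : FullyCommutative cs x)
    (hxy : bruhatLT cs x y) :
    2 * (Ctx.D x y).natDegree < cs.length y - cs.length x := by
  classical
  induction hn : cs.length y using Nat.strong_induction_on generalizing y with
  | _ n ih =>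
    subst hn
    have hlt := length_lt_of_bruhatLT hxy
    by_cases hy : FullyCommutative cs y
    · rw [D_eq_zero_of_ne hy hxy.2, natDegree_zero]
      omega
    -- (★) kills `σ(C'_y)`, which expresses `D_{x,y}` through the `D_{x,u}` with `u < y`.
    have hsum := projKLCoeff_eq_zero_of_not_fullyCommutative hstar hy
      (mem_fcLowerFinset.mpr ⟨hx, hxy.1⟩)
    rw [projKLCoeff, ← Finset.add_sum_erase _ _ (mem_lowerFinset.mpr .refl), Ctx.P_self,
      one_mul] at hsum
    rw [eq_neg_of_add_eq_zero_left hsum, natDegree_neg]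
    suffices hterm : ∀ u ∈ (Ctx.lowerFinset y).erase y,
        (Ctx.P u y * Ctx.D x u).natDegree ≤ (cs.length y - cs.length x - 1) / 2 by
      have := natDegree_sum_le_of_forall_le _ _ hterm
      omega
    intro u hu
    obtain ⟨hne, hu⟩ := Finset.mem_erase.mp hu
    have huy : bruhatLT cs u y := ⟨mem_lowerFinset.mp hu, hne⟩
    have hP := Ctx.P_degree u y huy
    have hmul := natDegree_mul_le (p := Ctx.P u y) (q := Ctx.D x u)
    have hluy := length_lt_of_bruhatLT huy
    by_cases hxu : bruhatLE cs x u
    · have hD : 2 * (Ctx.D x u).natDegree + cs.length x ≤ cs.length u := by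
        obtain rfl | hne' := eq_or_ne x u
        · rw [Ctx.D_self x hx, natDegree_one]
          omega
        · have := ih _ hluy ⟨hxu, hne'⟩ rfl
          omega
      omega
    · rw [Ctx.D_eq_zero x u fun h => hxu h.2, mul_zero, natDegree_zero]
      exact Nat.zero_le _

lemma coeff_projKLCoeff (hstar : Ctx.Star) {x w : W} (hx : FullyCommutative cs x)
    (hw : FullyCommutative cs w) (hxw : bruhatLE cs x w) {k : ℕ}
    (hk : 2 * k + 1 = cs.length w - cs.length x) :
    (Ctx.projKLCoeff x w).coeff k = (Ctx.P x w).coeff k := by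
  rw [projKLCoeff, finsetSum_coeff,
    Finset.sum_eq_single_of_mem x (mem_lowerFinset.mpr hxw), Ctx.D_self x hx, mul_one]
  intro y hy hyx
  by_cases hxy : bruhatLE cs x y
  · obtain rfl | hyw := eq_or_ne y w
    · rw [D_eq_zero_of_ne hw (Ne.symm hyx), mul_zero, coeff_zero]
    apply coeff_eq_zero_of_natDegree_lt
    have hP := Ctx.P_degree y w ⟨mem_lowerFinset.mp hy, hyw⟩
    have hD := two_mul_natDegree_D_lt hstar hx ⟨hxy, Ne.symm hyx⟩
    have hmul := natDegree_mul_le (p := Ctx.P y w) (q := Ctx.D x y)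
    have hlyw := length_le_of_bruhatLE (mem_lowerFinset.mp hy)
    have hlxy := length_le_of_bruhatLE hxy
    omega
  · rw [Ctx.D_eq_zero x y fun h => hxy h.2, mul_zero, coeff_zero]

end TLContext

/-- Proposition (paper, Prop. `muu`): if `X` satisfies (★) and `x, w ∈ W_c`, then the
coefficient `M(x,w)` of `q^{-1/2}` in `L_{x,w}(q^{-1/2})` equals the coefficient
`μ(x,w)` of `q^{(ℓ(w)-ℓ(x)-1)/2}` in the Kazhdan--Lusztig polynomial `P_{x,w}(q)`.
(Recall that `L x w` is a polynomial in the variable `v = q^{-1/2}`, so `M(x,w)` is its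
coefficient of degree `1`.) -/
theorem statement19 {B : Type*} {W : Type*} [Group W] {M : CoxeterMatrix B} {cs : CoxeterSystem M W}
    {H : Type*} [Ring H] [Algebra A H] {TL : Type*} [Ring TL] [Algebra A TL]
    (Ctx : TLContext cs H TL)
    (hstar : Ctx.Star) (x w : W)
    (hx : FullyCommutative cs x) (hw : FullyCommutative cs w) :
    (Ctx.L x w).coeff 1 = Ctx.mu x w := by
  by_cases hxw : bruhatLE cs x w
  swap
  · simp [TLContext.mu, Ctx.L_eq_zero x w fun h => hxw h.2.2, Ctx.P_eq_zero x w hxw]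
  obtain rfl | hne := eq_or_ne x w
  · simp [TLContext.mu, Ctx.L_self, coeff_one]
  have hlt := length_lt_of_bruhatLT ⟨hxw, hne⟩
  obtain ⟨N, hN⟩ : ∃ N, cs.length w - cs.length x = N + 1 :=
    ⟨cs.length w - cs.length x - 1, by omega⟩
  -- `T N = q^{N/2}` is the degree at which `μ(x,w)` and `M(x,w)` sit.
  have hcoeff := congrArg (fun p : A => p.coeff N)
    (TLContext.aeval_projKLCoeff_of_fullyCommutative hstar hw
      (TLContext.mem_fcLowerFinset.mpr ⟨hx, hxw⟩))
  have hN' : (N : ℤ) = ((cs.length w : ℤ) - cs.length x) - (1 : ℕ) := by omega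
  simp only [q] at hcoeff
  rw [coeff_aeval_T_two_natCast, hN', TLContext.Lq, coeff_T_mul_aeval_T_neg_one] at hcoeff
  rw [← hcoeff, TLContext.mu, hN, Nat.add_sub_cancel]
  simp only [Nat.odd_add_one, Nat.not_odd_iff_even, even_iff_two_dvd]
  split_ifs
  · exact TLContext.coeff_projKLCoeff hstar hx hw hxw (by omega)
  · rfl

end TLPaper
end
end
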